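/- For q = 1/2, the profit intensity ρ(a) = (e^{-a²}(2a² + 3/2)) / (√π + 2a·e^{-a²} + (√π/2)·erfc(a)) associated with the normalized Wigner density pdf(p) = e^{-p²}(2p² - 1/2)/(√π/2) is NOT globally maximized at its fixed point: there exists a real a with ρ(a) > ρ(a*) where a* satisfies ρ(a*) = a*. -/
import Mathlib

noncomputable def erfc (a : ℝ) : ℝ :=
  (2 / Real.sqrt Real.pi) * ∫ t in Set.Ioi a, Real.exp (-t^2)

noncomputable def ρ (a : ℝ) : ℝ :=
  (Real.exp (-a^2) * (2*a^2 + 3/2)) /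
    (Real.sqrt Real.pi + 2*a*Real.exp (-a^2) + (Real.sqrt Real.pi / 2) * erfc a)

open MeasureTheory Real Set

lemma gauss_integrable : Integrable (fun t : ℝ => Real.exp (-t^2)) := by
  have := integrable_exp_neg_mul_sq (b := 1) one_pos
  simpa using this

lemma gauss_Ioi_zero : ∫ t in Ioi (0:ℝ), Real.exp (-t^2) = Real.sqrt π / 2 := by
  have := integral_gaussian_Ioi 1
  simpa using this

lemma sqrtpi_bounds : 1.7724 ≤ Real.sqrt π ∧ Real.sqrt π ≤ 1.77246 := by
  have h1 : Real.sqrt π ^ 2 = π := Real.sq_sqrt pi_pos.le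
  have h0 : 0 ≤ Real.sqrt π := Real.sqrt_nonneg _
  have hlo := Real.pi_gt_d6
  have hhi := Real.pi_lt_d2
  have hhi2 := Real.pi_lt_d6
  constructor <;> nlinarith

lemma erfc_half_key : (Real.sqrt π / 2) * erfc a = ∫ t in Ioi a, Real.exp (-t^2) := by
  have hs : Real.sqrt π ≠ 0 := by
    have := Real.sqrt_pos.mpr pi_pos; linarith
  unfold erfc
  field_simp

lemma erfc_int_nonneg (a : ℝ) : 0 ≤ ∫ t in Ioi a, Real.exp (-t^2) :=
  setIntegral_nonneg measurableSet_Ioi (fun x _ => (Real.exp_pos _).le)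

lemma exp_neg_le_quad {x : ℝ} (hx : 0 ≤ x) : Real.exp (-x) ≤ 1 - x + x^2/2 := by
  have hP : 1 + x + x^2/2 + x^3/6 ≤ Real.exp x := by
    have := Real.sum_le_exp_of_nonneg hx 4
    simp [Finset.sum_range_succ, Nat.factorial] at this
    linarith
  have hmul : Real.exp (-x) * (1 + x + x^2/2 + x^3/6) ≤ 1 := by
    calc Real.exp (-x) * (1 + x + x^2/2 + x^3/6) ≤ Real.exp (-x) * Real.exp x :=
          mul_le_mul_of_nonneg_left hP (Real.exp_nonneg _)
      _ = 1 := by rw [← Real.exp_add]; simp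
  have hp : (0:ℝ) < 1 + x + x^2/2 + x^3/6 := by positivity
  have he : 0 < Real.exp (-x) := Real.exp_pos _
  nlinarith [sq_nonneg x, sq_nonneg (x^2), mul_pos he hp]

lemma exp_quarter_lt : Real.exp (1/4 : ℝ) < 1.2841 := by
  have h4 : Real.exp (1/4 : ℝ) ^ 4 = Real.exp 1 := by
    rw [← Real.exp_nat_mul]; norm_num
  have he := Real.exp_one_lt_d9
  have hpos : 0 < Real.exp (1/4 : ℝ) := Real.exp_pos _
  by_contra hc
  push_neg at hc
  have h2 : (1.2841:ℝ)^4 ≤ Real.exp (1/4:ℝ)^4 :=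
    pow_le_pow_left₀ (by norm_num) hc 4
  rw [h4] at h2
  norm_num at h2
  linarith

lemma exp_neg_quarter_gt : (0.7787 : ℝ) < Real.exp (-(1/4) : ℝ) := by
  have h := exp_quarter_lt
  have hpos : 0 < Real.exp (1/4 : ℝ) := Real.exp_pos _
  have : Real.exp (-(1/4) : ℝ) = (Real.exp (1/4 : ℝ))⁻¹ := by
    rw [← Real.exp_neg]
  rw [this]
  rw [lt_inv_comm₀ (by norm_num) hpos]
  calc Real.exp (1/4:ℝ) < 1.2841 := h
    _ ≤ (0.7787 : ℝ)⁻¹ := by norm_num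

-- upper bound on the Gaussian integral over Ioi (-1/2)
lemma gauss_Ioi_neg_half_le :
    ∫ t in Ioi (-(1/2):ℝ), Real.exp (-t^2) ≤ 0.4615 + Real.sqrt π / 2 := by
  have hsplit : (Ioc (-(1/2):ℝ) 0) ∪ Ioi (0:ℝ) = Ioi (-(1/2):ℝ) :=
    Ioc_union_Ioi_eq_Ioi (by norm_num)
  have hdisj : Disjoint (Ioc (-(1/2):ℝ) 0) (Ioi (0:ℝ)) := by
    rw [Set.disjoint_left]
    rintro x hx hx'
    exact absurd hx.2 (not_le.mpr hx')
  have hint := gauss_integrable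
  have heq : ∫ t in Ioi (-(1/2):ℝ), Real.exp (-t^2)
      = (∫ t in Ioc (-(1/2):ℝ) 0, Real.exp (-t^2)) + ∫ t in Ioi (0:ℝ), Real.exp (-t^2) := by
    rw [← hsplit, setIntegral_union hdisj measurableSet_Ioi
      hint.integrableOn hint.integrableOn]
  rw [heq, gauss_Ioi_zero]
  have hJ : (∫ t in Ioc (-(1/2):ℝ) 0, Real.exp (-t^2)) ≤ 0.4615 := by
    have h1 : (∫ t in Ioc (-(1/2):ℝ) 0, Real.exp (-t^2))
        = ∫ t in (-(1/2):ℝ)..0, Real.exp (-t^2) := by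
      rw [intervalIntegral.integral_of_le (by norm_num)]
    have i1 : IntervalIntegrable (fun _ : ℝ => (1:ℝ)) volume (-(1/2)) 0 :=
      intervalIntegrable_const
    have i2 : IntervalIntegrable (fun t : ℝ => t^2) volume (-(1/2)) 0 :=
      (continuous_pow 2).intervalIntegrable _ _
    have i3 : IntervalIntegrable (fun t : ℝ => t^4/2) volume (-(1/2)) 0 :=
      ((continuous_pow 4).div_const 2).intervalIntegrable _ _
    have hmono : (∫ t in (-(1/2):ℝ)..0, Real.exp (-t^2))
        ≤ ∫ t in (-(1/2):ℝ)..0, (1 - t^2 + t^4/2) := by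
      apply intervalIntegral.integral_mono_on (by norm_num)
        hint.intervalIntegrable ((i1.sub i2).add i3)
      intro x _
      have := exp_neg_le_quad (x := x^2) (sq_nonneg x)
      calc Real.exp (-x^2) ≤ 1 - x^2 + (x^2)^2/2 := this
        _ = 1 - x^2 + x^4/2 := by ring
    have hval : (∫ t in (-(1/2):ℝ)..0, (1 - t^2 + t^4/2)) = 1/2 - (1/24) + 1/320 := by
      rw [intervalIntegral.integral_add (i1.sub i2) i3,
        intervalIntegral.integral_sub i1 i2]
      have h4 : (∫ t in (-(1/2):ℝ)..0, t^4/2) = (∫ t in (-(1/2):ℝ)..0, t^4) / 2 := by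
        simpa using intervalIntegral.integral_div (2:ℝ) (fun t : ℝ => t^4)
          (a := (-(1/2):ℝ)) (b := 0)
      rw [h4, integral_one, integral_pow, integral_pow]
      norm_num
    rw [h1]
    rw [hval] at hmono
    linarith
  linarith

theorem stmt_13 (astar : ℝ) (hfix : ρ astar = astar) :
    ∃ a : ℝ, ρ astar < ρ a := by
  obtain ⟨hsl, hsu⟩ := sqrtpi_bounds
  have hs0 : 0 < Real.sqrt π := by linarith
  refine ⟨-(1/2), ?_⟩
  -- bound ρ (-(1/2)) from below by 3/5
  have hrho_half : (3/5 : ℝ) < ρ (-(1/2)) := by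
    unfold ρ
    rw [erfc_half_key]
    set E := Real.exp (-(-(1/2):ℝ)^2) with hE
    have hEeq : E = Real.exp (-(1/4):ℝ) := by rw [hE]; norm_num
    have hEl : (0.7787:ℝ) < E := by rw [hEeq]; exact exp_neg_quarter_gt
    have hEu : E ≤ 1 := by
      rw [hEeq]
      have := Real.exp_le_exp.mpr (show (-(1/4):ℝ) ≤ 0 by norm_num)
      simpa using this
    set I := ∫ t in Ioi (-(1/2):ℝ), Real.exp (-t^2) with hI
    have hIl : 0 ≤ I := erfc_int_nonneg _
    have hIu : I ≤ 0.4615 + Real.sqrt π / 2 := gauss_Ioi_neg_half_le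
    have hD : 0 < Real.sqrt π + 2*(-(1/2))*E + I := by nlinarith
    rw [lt_div_iff₀ hD]
    nlinarith
  rw [hfix]
  -- it remains to show astar < ρ (-(1/2)); split on whether astar < 3/5
  rcases lt_or_ge astar (3/5) with h | h
  · linarith
  · exfalso
    -- show ρ astar < 3/5 ≤ astar, contradicting hfix
    have ha0 : (0:ℝ) < astar := by linarith
    have hE' : 0 < Real.exp (-astar^2) := Real.exp_pos _
    set E := Real.exp (-astar^2) with hE
    set I := (Real.sqrt π / 2) * erfc astar with hI
    have hIl : 0 ≤ I := by
      rw [hI, erfc_half_key]; exact erfc_int_nonneg _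
    have hD : 0 < Real.sqrt π + 2*astar*E + I := by positivity
    have hP : 1 + astar^2 + (astar^2)^2/2 + (astar^2)^3/6 ≤ Real.exp (astar^2) := by
      have := Real.sum_le_exp_of_nonneg (sq_nonneg astar) 4
      simp [Finset.sum_range_succ, Nat.factorial] at this
      linarith
    have hPE : E * (1 + astar^2 + (astar^2)^2/2 + (astar^2)^3/6) ≤ 1 := by
      calc E * (1 + astar^2 + (astar^2)^2/2 + (astar^2)^3/6)
          ≤ E * Real.exp (astar^2) := mul_le_mul_of_nonneg_left hP hE'.le
        _ = 1 := by rw [hE, ← Real.exp_add]; simp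
    -- key polynomial inequality for a ≥ 3/5
    have hkey : 2*astar^2 + 3/2 - (6/5)*astar
        < (3/5) * Real.sqrt π * (1 + astar^2 + (astar^2)^2/2 + (astar^2)^3/6) := by
      have hu : (0:ℝ) ≤ astar - 3/5 := by linarith
      have hcs : (0:ℝ) ≤ (3/5) * Real.sqrt π - 1.06344 := by nlinarith
      have hpoly : (0:ℝ) ≤ 1 + astar^2 + (astar^2)^2/2 + (astar^2)^3/6 := by positivity
      nlinarith [pow_nonneg hu 2, pow_nonneg hu 3, pow_nonneg hu 4,
        pow_nonneg hu 5, pow_nonneg hu 6, hu, mul_nonneg hcs hpoly]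
    have hQpos : 0 < 2*astar^2 + 3/2 - (6/5)*astar := by nlinarith [sq_nonneg (astar - 3/10)]
    have hnum : E * (2*astar^2 + 3/2) < (3/5) * (Real.sqrt π + 2*astar*E + I) := by
      have h1 : E * (2*astar^2 + 3/2 - (6/5)*astar)
          < E * ((3/5) * Real.sqrt π * (1 + astar^2 + (astar^2)^2/2 + (astar^2)^3/6)) :=
        mul_lt_mul_of_pos_left hkey hE'
      have h2 : E * ((3/5) * Real.sqrt π * (1 + astar^2 + (astar^2)^2/2 + (astar^2)^3/6))
          ≤ (3/5) * Real.sqrt π := by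
        have : (3/5) * Real.sqrt π * (E * (1 + astar^2 + (astar^2)^2/2 + (astar^2)^3/6))
            ≤ (3/5) * Real.sqrt π * 1 := by
          apply mul_le_mul_of_nonneg_left hPE; positivity
        linarith [this]
      nlinarith
    have hlt : ρ astar < 3/5 := by
      unfold ρ
      rw [← hE, ← hI, div_lt_iff₀ hD]
      linarith
    linarith
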